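/- Let 0 < s ≤ 1, let μ be a Borel probability measure on ℝ^d with ∫ ‖x‖₂^s dμ(x) < ∞, and let P_n = {x₁, …, x_n} ⊂ ℝ^d be a finite set of n distinct points. Then inf over weight vectors a = (a₁, …, a_n) ∈ ℝⁿ of sup over all functions f : ℝ^d → ℝ satisfying |f(x) − f(y)| ≤ ‖x − y‖₂^s for all x, y ∈ ℝ^d of |∫_{ℝ^d} f dμ − ∑_{i=1}^n a_i f(x_i)| equals the distortion D_{μ,P_n,s} = ∫_{ℝ^d} dist(x, P_n)^s dμ(x). Moreover, the infimum is attained at the Voronoi weights a_i = μ(C_i), for any measurable partition C₁, …, C_n of ℝ^d with C_i ⊆ { x : ‖x − x_i‖₂ = dist(x, P_n) } for each i. -/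

import Mathlib

/-!
For any weights `a`, the test function `g = dist(·, P_n)^s` is itself `s`-Hölder with seminorm
at most `1` (since `t ↦ t^s` is `s`-Hölder on `[0, ∞)`) and vanishes at every node, so its
quadrature error is `∫ g dμ = D_{μ,P_n,s}`; hence the infimum is at least the distortion.
Conversely, with Voronoi weights `a_i = μ(C_i)` the error of any `f` splits over the cells as
`∑ᵢ ∫_{C_i} (f - f(x_i)) dμ`, and on `C_i` we have `|f - f(x_i)| ≤ ‖· - x_i‖^s = g`.
-/

open MeasureTheory Metric Set Function

lemma Real.abs_rpow_sub_rpow_le {s : ℝ} (hs0 : 0 ≤ s) (hs1 : s ≤ 1) {a b : ℝ} (ha : 0 ≤ a)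
    (hb : 0 ≤ b) : |a ^ s - b ^ s| ≤ |a - b| ^ s := by
  wlog hab : b ≤ a generalizing a b
  · rw [abs_sub_comm, abs_sub_comm a b]
    exact this hb ha (le_of_not_ge hab)
  have hsub : a ^ s ≤ (a - b) ^ s + b ^ s := by
    simpa using Real.rpow_add_le_add_rpow (sub_nonneg.2 hab) hb hs0 hs1
  rw [abs_of_nonneg (sub_nonneg.2 (Real.rpow_le_rpow hb hab hs0)),
    abs_of_nonneg (sub_nonneg.2 hab)]
  linarith

section Holder

variable {α : Type*} [PseudoMetricSpace α] {s : ℝ} {f : α → ℝ}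

lemma continuous_of_abs_sub_le_dist_rpow (hs : 0 < s)
    (hf : ∀ y z, |f y - f z| ≤ dist y z ^ s) : Continuous f := by
  rw [Metric.continuous_iff]
  intro b ε hε
  refine ⟨ε ^ s⁻¹, Real.rpow_pos_of_pos hε _, fun a hab => ?_⟩
  calc dist (f a) (f b) = |f a - f b| := Real.dist_eq _ _
    _ ≤ dist a b ^ s := hf a b
    _ < (ε ^ s⁻¹) ^ s := Real.rpow_lt_rpow dist_nonneg hab hs
    _ = ε := Real.rpow_inv_rpow hε.le hs.ne'

lemma abs_infDist_rpow_sub_le (hs0 : 0 ≤ s) (hs1 : s ≤ 1) (t : Set α) (y z : α) :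
    |infDist y t ^ s - infDist z t ^ s| ≤ dist y z ^ s := by
  refine (Real.abs_rpow_sub_rpow_le hs0 hs1 infDist_nonneg infDist_nonneg).trans ?_
  have hlip : |infDist y t - infDist z t| ≤ dist y z := by
    simpa [Real.dist_eq] using (lipschitz_infDist_pt t).dist_le_mul y z
  exact Real.rpow_le_rpow (abs_nonneg _) hlip hs0

variable [MeasurableSpace α] [OpensMeasurableSpace α] {μ : Measure α}

lemma integrable_of_abs_sub_le_dist_rpow [IsFiniteMeasure μ] (hs : 0 < s) {x₀ : α}
    (hmom : Integrable (fun y => dist y x₀ ^ s) μ) (hf : ∀ y z, |f y - f z| ≤ dist y z ^ s) :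
    Integrable f μ := by
  refine (hmom.add (integrable_const |f x₀|)).mono'
    (continuous_of_abs_sub_le_dist_rpow hs hf).aestronglyMeasurable (.of_forall fun y => ?_)
  rw [Real.norm_eq_abs, Pi.add_apply]
  linarith [abs_sub_abs_le_abs_sub (f y) (f x₀), hf y x₀]

lemma integrable_infDist_rpow [IsFiniteMeasure μ] (hs0 : 0 < s) (hs1 : s ≤ 1) {x₀ : α}
    (hmom : Integrable (fun y => dist y x₀ ^ s) μ) (t : Set α) :
    Integrable (fun y => infDist y t ^ s) μ :=
  integrable_of_abs_sub_le_dist_rpow hs0 hmom (abs_infDist_rpow_sub_le hs0.le hs1 t)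

end Holder

lemma abs_integral_sub_sum_le_of_partition {α ι : Type*} [MeasurableSpace α] {μ : Measure α}
    [IsFiniteMeasure μ] [Fintype ι] {C : ι → Set α} (hCm : ∀ i, MeasurableSet (C i))
    (hCd : Pairwise (Disjoint on C)) (hCu : ⋃ i, C i = univ) {f g : α → ℝ}
    (hf : Integrable f μ) (hg : Integrable g μ) (x : ι → α)
    (hfg : ∀ i, ∀ y ∈ C i, |f y - f (x i)| ≤ g y) :
    |∫ y, f y ∂μ - ∑ i, (μ (C i)).toReal * f (x i)| ≤ ∫ y, g y ∂μ := by
  have hsplit : ∀ F : α → ℝ, Integrable F μ → ∫ y, F y ∂μ = ∑ i, ∫ y in C i, F y ∂μ :=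
    fun F hF => by
      rw [← setIntegral_univ, ← hCu, integral_iUnion_fintype hCm hCd fun _ => hF.integrableOn]
  have hcell : ∀ i, ∫ y in C i, (f y - f (x i)) ∂μ =
      ∫ y in C i, f y ∂μ - (μ (C i)).toReal * f (x i) := fun i => by
    rw [integral_sub hf.integrableOn (integrableOn_const (measure_lt_top μ _).ne),
      setIntegral_const, smul_eq_mul, measureReal_def]
  calc |∫ y, f y ∂μ - ∑ i, (μ (C i)).toReal * f (x i)|
      = |∑ i, ∫ y in C i, (f y - f (x i)) ∂μ| := by
        simp only [hcell, Finset.sum_sub_distrib, ← hsplit f hf]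
    _ ≤ ∑ i, ∫ y in C i, |f y - f (x i)| ∂μ :=
        (Finset.abs_sum_le_sum_abs _ _).trans
          (Finset.sum_le_sum fun _ _ => abs_integral_le_integral_abs)
    _ ≤ ∑ i, ∫ y in C i, g y ∂μ :=
        Finset.sum_le_sum fun i _ => setIntegral_mono_on
          (hf.sub (integrable_const _)).abs.integrableOn hg.integrableOn (hCm i) (hfg i)
    _ = ∫ y, g y ∂μ := (hsplit g hg).symm

section Quantization

variable {α ι : Type*} [PseudoMetricSpace α] [MeasurableSpace α] {μ : Measure α} {s : ℝ} {x : ι → α}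

lemma exists_voronoi_partition [OpensMeasurableSpace α] [Finite ι] [Nonempty ι] [LinearOrder ι]
    [LocallyFiniteOrderBot ι] (x : ι → α) :
    ∃ C : ι → Set α, (∀ i, MeasurableSet (C i)) ∧ Pairwise (Disjoint on C) ∧
      ⋃ i, C i = univ ∧ ∀ i, C i ⊆ {y | dist y (x i) = infDist y (range x)} := by
  set P : ι → Set α := fun i => {y | dist y (x i) = infDist y (range x)}
  have hPm : ∀ i, MeasurableSet (P i) := fun i =>
    (isClosed_eq (continuous_id.dist continuous_const) (continuous_infDist_pt _)).measurableSet
  refine ⟨disjointed P, fun i => ?_, disjoint_disjointed P, ?_, disjointed_subset P⟩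
  · rw [disjointed_eq_inter_compl]
    exact (hPm i).inter (.iInter fun j => .iInter fun _ => (hPm j).compl)
  · rw [iUnion_disjointed, eq_univ_iff_forall]
    intro y
    obtain ⟨_, ⟨i, rfl⟩, hi⟩ :=
      (finite_range x).isCompact.exists_infDist_eq_dist (range_nonempty x) y
    exact mem_iUnion.2 ⟨i, hi.symm⟩

lemma lintegral_infDist_rpow_le_iSup [Fintype ι] (hs0 : 0 < s) (hs1 : s ≤ 1)
    (hint : Integrable (fun y => infDist y (range x) ^ s) μ) (a : ι → ℝ) :
    ∫⁻ y, ENNReal.ofReal (infDist y (range x) ^ s) ∂μ ≤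
      ⨆ f : {f : α → ℝ // ∀ y z, |f y - f z| ≤ dist y z ^ s},
        ENNReal.ofReal |(∫ y, f.1 y ∂μ) - ∑ i, a i * f.1 (x i)| := by
  refine le_iSup_of_le ⟨fun y => infDist y (range x) ^ s, abs_infDist_rpow_sub_le hs0.le hs1 _⟩
    (le_of_eq ?_)
  have hnodes : ∑ i, a i * infDist (x i) (range x) ^ s = 0 :=
    Finset.sum_eq_zero fun i _ => by
      rw [infDist_zero_of_mem (mem_range_self i), Real.zero_rpow hs0.ne', mul_zero]
  have hnonneg : ∀ y, 0 ≤ infDist y (range x) ^ s := fun _ => Real.rpow_nonneg infDist_nonneg s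
  rw [hnodes, sub_zero, abs_of_nonneg (integral_nonneg hnonneg),
    ofReal_integral_eq_lintegral_ofReal hint (.of_forall hnonneg)]

lemma iSup_eq_lintegral_infDist_rpow_of_voronoi [OpensMeasurableSpace α] [IsFiniteMeasure μ]
    [Fintype ι] (hs0 : 0 < s) (hs1 : s ≤ 1) {x₀ : α} (hmom : Integrable (fun y => dist y x₀ ^ s) μ)
    {C : ι → Set α} (hCm : ∀ i, MeasurableSet (C i)) (hCd : Pairwise (Disjoint on C))
    (hCu : ⋃ i, C i = univ) (hCx : ∀ i, C i ⊆ {y | dist y (x i) = infDist y (range x)}) :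
    ⨆ f : {f : α → ℝ // ∀ y z, |f y - f z| ≤ dist y z ^ s},
        ENNReal.ofReal |(∫ y, f.1 y ∂μ) - ∑ i, (μ (C i)).toReal * f.1 (x i)| =
      ∫⁻ y, ENNReal.ofReal (infDist y (range x) ^ s) ∂μ := by
  have hint := integrable_infDist_rpow hs0 hs1 hmom (range x)
  refine le_antisymm (iSup_le fun f => ?_) (lintegral_infDist_rpow_le_iSup hs0 hs1 hint _)
  rw [← ofReal_integral_eq_lintegral_ofReal hint
    (.of_forall fun _ => Real.rpow_nonneg infDist_nonneg s)]
  refine ENNReal.ofReal_le_ofReal (abs_integral_sub_sum_le_of_partition hCm hCd hCu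
    (integrable_of_abs_sub_le_dist_rpow hs0 hmom f.2) hint x fun i y hy => ?_)
  rw [← (hCx i hy : dist y (x i) = _)]
  exact f.2 y (x i)

end Quantization

theorem stmt13_general (d n : ℕ) (hn : 1 ≤ n) (s : ℝ) (hs0 : 0 < s) (hs1 : s ≤ 1)
    (μ : Measure (EuclideanSpace ℝ (Fin d))) [IsProbabilityMeasure μ]
    (hmom : ∫⁻ y, ENNReal.ofReal (‖y‖ ^ s) ∂μ < ⊤)
    (x : Fin n → EuclideanSpace ℝ (Fin d)) :
    -- the minimal worst-case error over functions of s-Hölder seminorm ≤ 1 equals the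
    -- distortion:
    (⨅ a : Fin n → ℝ,
      ⨆ f : {f : EuclideanSpace ℝ (Fin d) → ℝ // ∀ y z, |f y - f z| ≤ dist y z ^ s},
        ENNReal.ofReal |(∫ y, f.1 y ∂μ) - ∑ i, a i * f.1 (x i)|) =
      ∫⁻ y, ENNReal.ofReal (Metric.infDist y (Set.range x) ^ s) ∂μ ∧
    -- and the infimum is attained at the Voronoi weights:
    ∀ C : Fin n → Set (EuclideanSpace ℝ (Fin d)),
      (∀ i, MeasurableSet (C i)) →
      (Pairwise (Function.onFun Disjoint C)) →
      (⋃ i, C i) = Set.univ →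
      (∀ i, C i ⊆ {y | dist y (x i) = Metric.infDist y (Set.range x)}) →
      (⨆ f : {f : EuclideanSpace ℝ (Fin d) → ℝ // ∀ y z, |f y - f z| ≤ dist y z ^ s},
        ENNReal.ofReal |(∫ y, f.1 y ∂μ) - ∑ i, (μ (C i)).toReal * f.1 (x i)|) =
      ∫⁻ y, ENNReal.ofReal (Metric.infDist y (Set.range x) ^ s) ∂μ := by
  have : Nonempty (Fin n) := ⟨⟨0, hn⟩⟩
  have hmom_dist : Integrable (fun y => dist y (0 : EuclideanSpace ℝ (Fin d)) ^ s) μ := by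
    simp only [dist_zero_right]
    refine ⟨(continuous_norm.rpow_const fun _ => Or.inr hs0.le).aestronglyMeasurable, ?_⟩
    rwa [hasFiniteIntegral_iff_ofReal (.of_forall fun y => by positivity)]
  have hvoronoi := fun C => iSup_eq_lintegral_infDist_rpow_of_voronoi (μ := μ) (x := x)
    (C := C) hs0 hs1 hmom_dist
  obtain ⟨C, hCm, hCd, hCu, hCx⟩ := exists_voronoi_partition x
  exact ⟨le_antisymm (iInf_le_of_le _ (hvoronoi C hCm hCd hCu hCx).le)
    (le_iInf (lintegral_infDist_rpow_le_iSup hs0 hs1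
      (integrable_infDist_rpow hs0 hs1 hmom_dist _))), hvoronoi⟩

theorem stmt13 (d n : ℕ) (hn : 1 ≤ n) (s : ℝ) (hs0 : 0 < s) (hs1 : s ≤ 1)
    (μ : Measure (EuclideanSpace ℝ (Fin d))) [IsProbabilityMeasure μ]
    (hmom : ∫⁻ y, ENNReal.ofReal (‖y‖ ^ s) ∂μ < ⊤)
    (x : Fin n → EuclideanSpace ℝ (Fin d)) (hinj : Function.Injective x) :
    -- the minimal worst-case error over functions of s-Hölder seminorm ≤ 1 equals the
    -- distortion:
    (⨅ a : Fin n → ℝ,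
      ⨆ f : {f : EuclideanSpace ℝ (Fin d) → ℝ // ∀ y z, |f y - f z| ≤ dist y z ^ s},
        ENNReal.ofReal |(∫ y, f.1 y ∂μ) - ∑ i, a i * f.1 (x i)|) =
      ∫⁻ y, ENNReal.ofReal (Metric.infDist y (Set.range x) ^ s) ∂μ ∧
    -- and the infimum is attained at the Voronoi weights:
    ∀ C : Fin n → Set (EuclideanSpace ℝ (Fin d)),
      (∀ i, MeasurableSet (C i)) →
      (Pairwise (Function.onFun Disjoint C)) →
      (⋃ i, C i) = Set.univ →
      (∀ i, C i ⊆ {y | dist y (x i) = Metric.infDist y (Set.range x)}) →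
      (⨆ f : {f : EuclideanSpace ℝ (Fin d) → ℝ // ∀ y z, |f y - f z| ≤ dist y z ^ s},
        ENNReal.ofReal |(∫ y, f.1 y ∂μ) - ∑ i, (μ (C i)).toReal * f.1 (x i)|) =
      ∫⁻ y, ENNReal.ofReal (Metric.infDist y (Set.range x) ^ s) ∂μ :=
  stmt13_general d n hn s hs0 hs1 μ hmom x
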